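/- arXiv:1312.7547 — 2 statements merged into one kernel-verified Lean document; each statement's English description precedes it below -/
import Mathlib

section
/- Let E,A ∈ ℝ^{c×n}, B ∈ ℝ^{c×m}, and let S,T be invertible with SET = [[I_r,0],[0,0]], SAT = [[Ã, A₁₂],[A₂₁, A₂₂]], SB = [B₁; B₂] with Ã ∈ ℝ^{r×r}. Set G = [A₁₂, B₁], C̃ = A₂₁, D̃ = [A₂₂, B₂]. Then for any (x,u) ∈ L¹_loc(I,ℝⁿ) × L¹_loc(I,ℝᵐ), the pair (x,u) is a solution of d(Ex)/dt = Ax + Bu on I if and only if, defining (p;q) = diag(T⁻¹, I_m)·(x;u) with p the first r components, p is absolutely continuous, ṗ = Ãp + Gq a.e., and 0 = C̃p + D̃q a.e. -/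
open MeasureTheory Set Filter Matrix

def IsNiceInterval (I : Set ℝ) : Prop :=
  (∃ a b, I = Set.Icc a b) ∨ (∃ a, I = Set.Ici a) ∨ (∃ a, I = Set.Iic a) ∨ I = Set.univ

def IsDAESolution {c n m : ℕ} (E A : Matrix (Fin c) (Fin n) ℝ)
    (B : Matrix (Fin c) (Fin m) ℝ) (I : Set ℝ)
    (x : ℝ → Fin n → ℝ) (u : ℝ → Fin m → ℝ) : Prop :=
  LocallyIntegrableOn x I ∧ LocallyIntegrableOn u I ∧
  ∀ t₀ ∈ I, ∀ t ∈ I, t₀ ≤ t →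
    E.mulVec (x t) = E.mulVec (x t₀) + ∫ s in t₀..t, (A.mulVec (x s) + B.mulVec (u s))

def IsStateTraj {r : ℕ} {σ : Type} [Fintype σ] (Al : Matrix (Fin r) (Fin r) ℝ)
    (Bl : Matrix (Fin r) σ ℝ)
    (I : Set ℝ) (p : ℝ → Fin r → ℝ) (g : ℝ → σ → ℝ) : Prop :=
  LocallyIntegrableOn p I ∧ LocallyIntegrableOn g I ∧
  ∀ t₀ ∈ I, ∀ t ∈ I, t₀ ≤ t →
    p t = p t₀ + ∫ τ in t₀..t, (Al.mulVec (p τ) + Bl.mulVec (g τ))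

section Blocks

variable {c n m r : ℕ} (hrc : r ≤ c) (hrn : r ≤ n)

/-- embedding of the last `n - r` indices into `Fin n` -/
def hiIdx (hrn : r ≤ n) (j : Fin (n - r)) : Fin n :=
  Fin.cast (Nat.sub_add_cancel hrn) (j.addNat r)

/-- `Ã`: top-left `r × r` block of `S * A * T`. -/
def blkA (M : Matrix (Fin c) (Fin n) ℝ) : Matrix (Fin r) (Fin r) ℝ :=
  Matrix.of fun i j => M (Fin.castLE hrc i) (Fin.castLE hrn j)

/-- `G = [A₁₂, B₁]`. -/
def blkG (M : Matrix (Fin c) (Fin n) ℝ) (N : Matrix (Fin c) (Fin m) ℝ) :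
    Matrix (Fin r) (Fin (n - r) ⊕ Fin m) ℝ :=
  Matrix.of fun i j =>
    Sum.elim (fun j' => M (Fin.castLE hrc i) (hiIdx hrn j'))
      (fun j' => N (Fin.castLE hrc i) j') j

/-- `C̃ = A₂₁`. -/
def blkC (M : Matrix (Fin c) (Fin n) ℝ) : Matrix (Fin (c - r)) (Fin r) ℝ :=
  Matrix.of fun i j => M (hiIdx hrc i) (Fin.castLE hrn j)

/-- `D̃ = [A₂₂, B₂]`. -/
def blkD (M : Matrix (Fin c) (Fin n) ℝ) (N : Matrix (Fin c) (Fin m) ℝ) :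
    Matrix (Fin (c - r)) (Fin (n - r) ⊕ Fin m) ℝ :=
  Matrix.of fun i j =>
    Sum.elim (fun j' => M (hiIdx hrc i) (hiIdx hrn j'))
      (fun j' => N (hiIdx hrc i) j') j

end Blocks

section Aux

lemma IsNiceInterval.isClosed {I : Set ℝ} (hI : IsNiceInterval I) : IsClosed I := by
  rcases hI with ⟨a, b, rfl⟩ | ⟨a, rfl⟩ | ⟨a, rfl⟩ | rfl
  exacts [isClosed_Icc, isClosed_Ici, isClosed_Iic, isClosed_univ]

lemma IsNiceInterval.ordConnected {I : Set ℝ} (hI : IsNiceInterval I) : I.OrdConnected := by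
  rcases hI with ⟨a, b, rfl⟩ | ⟨a, rfl⟩ | ⟨a, rfl⟩ | rfl
  exacts [Set.ordConnected_Icc, Set.ordConnected_Ici, Set.ordConnected_Iic,
    Set.ordConnected_univ]

lemma IsNiceInterval.boundary_null {I : Set ℝ} (hI : IsNiceInterval I) :
    volume (I \ interior I) = 0 := by
  have hc : (I \ interior I).Countable := by
    rcases hI with ⟨a, b, rfl⟩ | ⟨a, rfl⟩ | ⟨a, rfl⟩ | rfl
    · refine Set.Countable.mono (fun x hx => ?_) (((Set.countable_singleton b).insert a))
      obtain ⟨h1, h2⟩ := hx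
      rw [interior_Icc, Set.mem_Ioo, not_and_or, not_lt, not_lt] at h2
      simp only [Set.mem_insert_iff, Set.mem_singleton_iff]
      rcases h2 with h | h
      · exact Or.inl (le_antisymm h h1.1)
      · exact Or.inr (le_antisymm h1.2 h)
    · refine Set.Countable.mono (fun x hx => ?_) (Set.countable_singleton a)
      obtain ⟨h1, h2⟩ := hx
      rw [interior_Ici, Set.mem_Ioi, not_lt] at h2
      exact le_antisymm h2 h1
    · refine Set.Countable.mono (fun x hx => ?_) (Set.countable_singleton a)
      obtain ⟨h1, h2⟩ := hx
      rw [interior_Iic, Set.mem_Iio, not_lt] at h2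
      exact le_antisymm h1 h2
    · simp
  exact hc.measure_zero _

theorem MeasureTheory.LocallyIntegrableOn.clm_comp {X Y : Type*} [NormedAddCommGroup X]
    [NormedSpace ℝ X] [NormedAddCommGroup Y] [NormedSpace ℝ Y] {I : Set ℝ} {f : ℝ → X}
    (hf : LocallyIntegrableOn f I) (L : X →L[ℝ] Y) :
    LocallyIntegrableOn (fun t => L (f t)) I := fun x hx => by
  obtain ⟨s, hs, hint⟩ := hf x hx
  exact ⟨s, hs, L.integrable_comp hint⟩

/-- If a locally integrable function on a nice interval has zero integral over every
subinterval, it vanishes almost everywhere on the interval. -/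
lemma ae_zero_of_intervalIntegral_zero {EE : Type*} [NormedAddCommGroup EE]
    [NormedSpace ℝ EE] [CompleteSpace EE] {I : Set ℝ} (hI : IsNiceInterval I) {g : ℝ → EE}
    (hg : LocallyIntegrableOn g I)
    (h : ∀ t₀ ∈ I, ∀ t ∈ I, t₀ ≤ t → (∫ s in t₀..t, g s) = 0) :
    ∀ᵐ t ∂(volume.restrict I), g t = 0 := by
  classical
  have hIc : IsClosed I := hI.isClosed
  have hf : LocallyIntegrable (I.indicator g) volume := by
    rw [locallyIntegrable_iff]
    intro k hk
    have h1 : IntegrableOn g (k ∩ I) volume :=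
      hg.integrableOn_compact_subset Set.inter_subset_right (hk.inter_right hIc)
    rw [IntegrableOn, integrable_indicator_iff hIc.measurableSet, IntegrableOn,
      Measure.restrict_restrict hIc.measurableSet, Set.inter_comm]
    exact h1
  have hae := IsUnifLocDoublingMeasure.ae_tendsto_average (μ := (volume : Measure ℝ)) hf 1
  have hmem : ∀ᵐ t ∂(volume.restrict I), t ∈ I := ae_restrict_mem hIc.measurableSet
  have hint : ∀ᵐ t ∂(volume.restrict I), t ∈ interior I := by
    rw [ae_restrict_iff' hIc.measurableSet, ae_iff]
    refine measure_mono_null (fun x hx => ?_) hI.boundary_null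
    rw [Set.mem_setOf_eq, Classical.not_imp] at hx
    exact ⟨hx.1, hx.2⟩
  filter_upwards [hmem, hint, ae_restrict_of_ae hae] with t htI htint htend
  obtain ⟨ε, εpos, hball⟩ := Metric.isOpen_iff.mp isOpen_interior t htint
  have key : Filter.Tendsto (fun r : ℝ => ⨍ y in Metric.closedBall t r, I.indicator g y)
      (nhdsWithin 0 (Set.Ioi 0)) (nhds (I.indicator g t)) := by
    refine htend (fun _ => t) id tendsto_id ?_
    refine Filter.eventually_of_mem self_mem_nhdsWithin fun r hr => ?_
    have : (0:ℝ) < r := hr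
    exact Metric.mem_closedBall_self (by simpa using this.le)
  have keval : ∀ᶠ r in nhdsWithin (0:ℝ) (Set.Ioi 0),
      (⨍ y in Metric.closedBall t r, I.indicator g y) = 0 := by
    filter_upwards [Ioc_mem_nhdsGT_of_mem (Set.left_mem_Ico.mpr (half_pos εpos))] with r hr
    have hsub : Metric.closedBall t r ⊆ I := fun y hy =>
      interior_subset (hball (lt_of_le_of_lt (Metric.mem_closedBall.mp hy)
        (by linarith [hr.1, hr.2, half_lt_self εpos])))
    have h2 : Set.Icc (t - r) (t + r) ⊆ I := by rw [← Real.closedBall_eq_Icc]; exact hsub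
    have he1 : t - r ∈ I := h2 ⟨le_rfl, by linarith [hr.1]⟩
    have he2 : t + r ∈ I := h2 ⟨by linarith [hr.1], le_rfl⟩
    have hzero : (∫ y in Metric.closedBall t r, I.indicator g y) = 0 := by
      rw [Real.closedBall_eq_Icc,
        setIntegral_congr_fun measurableSet_Icc
          (fun y hy => Set.indicator_of_mem (h2 hy) g),
        MeasureTheory.integral_Icc_eq_integral_Ioc,
        ← intervalIntegral.integral_of_le (by linarith [hr.1])]
      exact h _ he1 _ he2 (by linarith [hr.1])
    rw [setAverage_eq, hzero, smul_zero]
  have h0 : I.indicator g t = 0 :=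
    tendsto_nhds_unique key (Filter.Tendsto.congr' (keval.mono fun r hr => hr.symm) tendsto_const_nhds)
  rwa [Set.indicator_of_mem htI] at h0

lemma hiIdx_val {n r : ℕ} (hrn : r ≤ n) (j : Fin (n - r)) : (hiIdx hrn j : ℕ) = j + r := rfl

lemma sum_split {n r : ℕ} (hrn : r ≤ n) (f : Fin n → ℝ) :
    ∑ j, f j = (∑ j : Fin r, f (Fin.castLE hrn j)) + ∑ j : Fin (n - r), f (hiIdx hrn j) := by
  have key : ∑ j : Fin r ⊕ Fin (n - r),
      f ((finSumFinEquiv.trans (finCongr (Nat.add_sub_cancel' hrn))) j) = ∑ j, f j :=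
    Fintype.sum_equiv _ _ _ (fun _ => rfl)
  rw [← key, Fintype.sum_sum_type]
  have h1 : ∀ j : Fin r,
      (finSumFinEquiv.trans (finCongr (Nat.add_sub_cancel' hrn))) (Sum.inl j) =
        Fin.castLE hrn j := by
    intro j
    apply Fin.ext
    simp
  have h2 : ∀ j : Fin (n - r),
      (finSumFinEquiv.trans (finCongr (Nat.add_sub_cancel' hrn))) (Sum.inr j) =
        hiIdx hrn j := by
    intro j
    apply Fin.ext
    simp only [Equiv.trans_apply, finSumFinEquiv_apply_right, finCongr_apply, Fin.coe_cast,
      Fin.coe_natAdd, hiIdx_val]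
    omega
  simp_rw [h1, h2]

lemma mulVec_SET {c n r : ℕ} (hrc : r ≤ c) (hrn : r ≤ n) {P : Matrix (Fin c) (Fin n) ℝ}
    (hP : ∀ i j, P i j = if (i : ℕ) = (j : ℕ) ∧ (i : ℕ) < r then 1 else 0)
    (v : Fin n → ℝ) (i : Fin c) :
    P.mulVec v i = if h : (i : ℕ) < r then v (Fin.castLE hrn ⟨(i : ℕ), h⟩) else 0 := by
  rw [Matrix.mulVec, dotProduct]
  split_ifs with h
  · rw [Finset.sum_eq_single (Fin.castLE hrn ⟨(i : ℕ), h⟩)]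
    · rw [hP]; simp [h]
    · intro j _ hj
      rw [hP, if_neg, zero_mul]
      rintro ⟨h1, -⟩
      exact hj (Fin.ext (by simpa using h1.symm))
    · simp
  · refine Finset.sum_eq_zero fun j _ => ?_
    rw [hP, if_neg, zero_mul]
    rintro ⟨-, h2⟩
    exact h h2

lemma row_lo {c n m r : ℕ} (hrc : r ≤ c) (hrn : r ≤ n)
    (M : Matrix (Fin c) (Fin n) ℝ) (N : Matrix (Fin c) (Fin m) ℝ)
    (y : Fin n → ℝ) (u : Fin m → ℝ) (i : Fin r) :
    ((blkA hrc hrn M).mulVec (fun i' => y (Fin.castLE hrn i')) +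
        (blkG hrc hrn M N).mulVec (Sum.elim (fun j => y (hiIdx hrn j)) u)) i =
      (M.mulVec y + N.mulVec u) (Fin.castLE hrc i) := by
  simp only [Pi.add_apply, Matrix.mulVec, dotProduct, blkA, blkG, Matrix.of_apply]
  rw [sum_split hrn (fun j => M (Fin.castLE hrc i) j * y j), Fintype.sum_sum_type]
  simp only [Sum.elim_inl, Sum.elim_inr]
  ring

lemma row_hi {c n m r : ℕ} (hrc : r ≤ c) (hrn : r ≤ n)
    (M : Matrix (Fin c) (Fin n) ℝ) (N : Matrix (Fin c) (Fin m) ℝ)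
    (y : Fin n → ℝ) (u : Fin m → ℝ) (i : Fin (c - r)) :
    ((blkC hrc hrn M).mulVec (fun i' => y (Fin.castLE hrn i')) +
        (blkD hrc hrn M N).mulVec (Sum.elim (fun j => y (hiIdx hrn j)) u)) i =
      (M.mulVec y + N.mulVec u) (hiIdx hrc i) := by
  simp only [Pi.add_apply, Matrix.mulVec, dotProduct, blkC, blkD, Matrix.of_apply]
  rw [sum_split hrn (fun j => M (hiIdx hrc i) j * y j), Fintype.sum_sum_type]
  simp only [Sum.elim_inl, Sum.elim_inr]
  ring

noncomputable def mvCLM {a b : ℕ} (P : Matrix (Fin a) (Fin b) ℝ) :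
    (Fin b → ℝ) →L[ℝ] (Fin a → ℝ) := LinearMap.toContinuousLinearMap P.mulVecLin

@[simp] lemma mvCLM_apply {a b : ℕ} (P : Matrix (Fin a) (Fin b) ℝ) (v : Fin b → ℝ) :
    mvCLM P v = P.mulVec v := rfl

noncomputable def restCLM {α β : Type*} [Fintype α] (φ : β → α) :
    (α → ℝ) →L[ℝ] (β → ℝ) := ContinuousLinearMap.pi fun j => ContinuousLinearMap.proj (φ j)

@[simp] lemma restCLM_apply {α β : Type*} [Fintype α] (φ : β → α) (v : α → ℝ) (j : β) :
    restCLM φ v j = v (φ j) := rfl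

noncomputable def padlCLM {α β : Type*} (γ : Type*) [Fintype α] (φ : β → α) :
    (α → ℝ) →L[ℝ] (β ⊕ γ → ℝ) :=
  ContinuousLinearMap.pi
    (Sum.elim (fun j => ContinuousLinearMap.proj (φ j))
      (fun _ => (0 : (α → ℝ) →L[ℝ] ℝ)))

noncomputable def padrCLM {γ : Type*} (β : Type*) [Fintype γ] :
    (γ → ℝ) →L[ℝ] (β ⊕ γ → ℝ) :=
  ContinuousLinearMap.pi
    (Sum.elim (fun _ => (0 : (γ → ℝ) →L[ℝ] ℝ))
      (fun j => ContinuousLinearMap.proj j))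

@[simp] lemma padlCLM_inl {α β γ : Type*} [Fintype α] (φ : β → α) (v : α → ℝ) (j : β) :
    padlCLM γ φ v (Sum.inl j) = v (φ j) := rfl

@[simp] lemma padlCLM_inr {α β γ : Type*} [Fintype α] (φ : β → α) (v : α → ℝ) (j : γ) :
    padlCLM γ φ v (Sum.inr j) = 0 := rfl

@[simp] lemma padrCLM_inl {β γ : Type*} [Fintype γ] (v : γ → ℝ) (j : β) :
    padrCLM β v (Sum.inl j) = 0 := rfl

@[simp] lemma padrCLM_inr {β γ : Type*} [Fintype γ] (v : γ → ℝ) (j : γ) :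
    padrCLM β v (Sum.inr j) = v j := rfl

end Aux

/-- The transformation of Theorem 2 (proof of Theorem `dae2lin:theo`): `(x,u)` solves the DAE
`d(Ex)/dt = Ax + Bu` on `I` iff the first `r` components `p` of `T⁻¹ x` are absolutely
continuous with `ṗ = Ãp + Gq` a.e. and `0 = C̃p + D̃q` a.e., where
`(p;q) = diag(T⁻¹, I_m)·(x;u)`. -/
theorem dae_solution_iff_ode_output {c n m r : ℕ} (hrc : r ≤ c) (hrn : r ≤ n)
    (E A : Matrix (Fin c) (Fin n) ℝ) (B : Matrix (Fin c) (Fin m) ℝ)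
    (S : Matrix (Fin c) (Fin c) ℝ) (T : Matrix (Fin n) (Fin n) ℝ)
    (hS : IsUnit S) (hT : IsUnit T)
    (hSET : ∀ (i : Fin c) (j : Fin n),
      (S * E * T) i j = if (i : ℕ) = (j : ℕ) ∧ (i : ℕ) < r then 1 else 0)
    (I : Set ℝ) (hI : IsNiceInterval I)
    (x : ℝ → Fin n → ℝ) (u : ℝ → Fin m → ℝ)
    (hx : LocallyIntegrableOn x I) (hu : LocallyIntegrableOn u I) :
    IsDAESolution E A B I x u ↔
      (IsStateTraj (blkA hrc hrn (S * A * T)) (blkG hrc hrn (S * A * T) (S * B)) I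
        (fun t i => (T⁻¹.mulVec (x t)) (Fin.castLE hrn i))
        (fun t => Sum.elim (fun j => (T⁻¹.mulVec (x t)) (hiIdx hrn j)) (u t)) ∧
      ∀ᵐ t ∂(volume.restrict I),
        (blkC hrc hrn (S * A * T)).mulVec (fun i => (T⁻¹.mulVec (x t)) (Fin.castLE hrn i)) +
          (blkD hrc hrn (S * A * T) (S * B)).mulVec
            (Sum.elim (fun j => (T⁻¹.mulVec (x t)) (hiIdx hrn j)) (u t)) = 0) := by
  classical
  have hdS : IsUnit S.det := (Matrix.isUnit_iff_isUnit_det S).mp hS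
  have hdT : IsUnit T.det := (Matrix.isUnit_iff_isUnit_det T).mp hT
  have hOC : I.OrdConnected := hI.ordConnected
  have hTT : T * T⁻¹ = 1 := Matrix.mul_nonsing_inv T hdT
  have hSinj : Function.Injective (fun v : Fin c → ℝ => S.mulVec v) := by
    intro a b hab
    have := congrArg (fun v => S⁻¹.mulVec v) hab
    simpa [Matrix.mulVec_mulVec, Matrix.nonsing_inv_mul S hdS] using this
  -- the transformed right-hand side
  set w : ℝ → Fin c → ℝ :=
    fun s => (S * A * T).mulVec (T⁻¹.mulVec (x s)) + (S * B).mulVec (u s) with hw_def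
  have hw_eq : ∀ s, w s = S.mulVec (A.mulVec (x s) + B.mulVec (u s)) := by
    intro s
    show (S * A * T).mulVec (T⁻¹.mulVec (x s)) + (S * B).mulVec (u s) = _
    rw [Matrix.mulVec_add]
    congr 1
    · rw [Matrix.mulVec_mulVec, Matrix.mulVec_mulVec,
        Matrix.mul_assoc (S * A) T T⁻¹, hTT, Matrix.mul_one]
    · rw [Matrix.mulVec_mulVec]
  have hz_eq : ∀ s, (S * E * T).mulVec (T⁻¹.mulVec (x s)) = S.mulVec (E.mulVec (x s)) := by
    intro s
    rw [Matrix.mulVec_mulVec, Matrix.mulVec_mulVec, Matrix.mul_assoc (S * E) T T⁻¹, hTT,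
      Matrix.mul_one]
  -- interval integrability
  have hInt : ∀ t₀ ∈ I, ∀ t ∈ I, t₀ ≤ t → ∀ {k : ℕ} (C₁ : Matrix (Fin k) (Fin n) ℝ)
      (C₂ : Matrix (Fin k) (Fin m) ℝ),
      IntervalIntegrable (fun s => C₁.mulVec (x s) + C₂.mulVec (u s)) volume t₀ t := by
    intro t₀ ht₀ t ht hle k C₁ C₂
    have hsub : Set.Icc t₀ t ⊆ I := hOC.out ht₀ ht
    have hx' : IntegrableOn x (Set.Icc t₀ t) := hx.integrableOn_compact_subset hsub isCompact_Icc
    have hu' : IntegrableOn u (Set.Icc t₀ t) := hu.integrableOn_compact_subset hsub isCompact_Icc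
    apply MeasureTheory.IntegrableOn.intervalIntegrable
    rw [Set.uIcc_of_le hle]
    exact ((mvCLM C₁).integrable_comp hx').add ((mvCLM C₂).integrable_comp hu')
  have hwint : ∀ t₀ ∈ I, ∀ t ∈ I, t₀ ≤ t → IntervalIntegrable w volume t₀ t := by
    intro t₀ ht₀ t ht hle
    have := hInt t₀ ht₀ t ht hle (S * A * T * T⁻¹) (S * B)
    simpa [hw_def, Matrix.mulVec_mulVec] using this
  -- component identities for z
  have hz_lo : ∀ s (i : Fin r),
      (S * E * T).mulVec (T⁻¹.mulVec (x s)) (Fin.castLE hrc i) =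
        (T⁻¹.mulVec (x s)) (Fin.castLE hrn i) := by
    intro s i
    rw [mulVec_SET hrc hrn hSET, dif_pos (by simpa using i.isLt)]
    exact congrArg _ (Fin.ext (by simp))
  have hz_hi : ∀ s (i : Fin (c - r)),
      (S * E * T).mulVec (T⁻¹.mulVec (x s)) (hiIdx hrc i) = 0 := by
    intro s i
    rw [mulVec_SET hrc hrn hSET, dif_neg]
    rw [hiIdx_val]
    omega
  -- identification of the block integrands
  have eV : (fun τ => (blkA hrc hrn (S * A * T)).mulVec
        (fun i => (T⁻¹.mulVec (x τ)) (Fin.castLE hrn i)) +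
        (blkG hrc hrn (S * A * T) (S * B)).mulVec
          (Sum.elim (fun j => (T⁻¹.mulVec (x τ)) (hiIdx hrn j)) (u τ))) =
      fun τ => restCLM (Fin.castLE hrc) (w τ) := by
    funext τ i
    exact row_lo hrc hrn (S * A * T) (S * B) (T⁻¹.mulVec (x τ)) (u τ) i
  have eV' : (fun τ => (blkC hrc hrn (S * A * T)).mulVec
        (fun i => (T⁻¹.mulVec (x τ)) (Fin.castLE hrn i)) +
        (blkD hrc hrn (S * A * T) (S * B)).mulVec
          (Sum.elim (fun j => (T⁻¹.mulVec (x τ)) (hiIdx hrn j)) (u τ))) =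
      fun τ => restCLM (hiIdx hrc) (w τ) := by
    funext τ i
    exact row_hi hrc hrn (S * A * T) (S * B) (T⁻¹.mulVec (x τ)) (u τ) i
  -- the key pointwise equivalence
  have main : ∀ t₀ ∈ I, ∀ t ∈ I, ∀ _hle : t₀ ≤ t,
      (E.mulVec (x t) = E.mulVec (x t₀) +
          ∫ s in t₀..t, (A.mulVec (x s) + B.mulVec (u s))) ↔
      (((fun i => (T⁻¹.mulVec (x t)) (Fin.castLE hrn i)) =
          (fun i => (T⁻¹.mulVec (x t₀)) (Fin.castLE hrn i)) +
          ∫ τ in t₀..t, ((blkA hrc hrn (S * A * T)).mulVec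
              (fun i => (T⁻¹.mulVec (x τ)) (Fin.castLE hrn i)) +
            (blkG hrc hrn (S * A * T) (S * B)).mulVec
              (Sum.elim (fun j => (T⁻¹.mulVec (x τ)) (hiIdx hrn j)) (u τ)))) ∧
        ((∫ τ in t₀..t, ((blkC hrc hrn (S * A * T)).mulVec
              (fun i => (T⁻¹.mulVec (x τ)) (Fin.castLE hrn i)) +
            (blkD hrc hrn (S * A * T) (S * B)).mulVec
              (Sum.elim (fun j => (T⁻¹.mulVec (x τ)) (hiIdx hrn j)) (u τ)))) = 0)) := by
    intro t₀ ht₀ t ht hle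
    have hv := hInt t₀ ht₀ t ht hle A B
    have hwi := hwint t₀ ht₀ t ht hle
    have stepA : (E.mulVec (x t) = E.mulVec (x t₀) +
          ∫ s in t₀..t, (A.mulVec (x s) + B.mulVec (u s))) ↔
        ((S * E * T).mulVec (T⁻¹.mulVec (x t)) =
          (S * E * T).mulVec (T⁻¹.mulVec (x t₀)) + ∫ s in t₀..t, w s) := by
      rw [hz_eq t, hz_eq t₀]
      have hIw : (∫ s in t₀..t, w s) =
          mvCLM S (∫ s in t₀..t, (A.mulVec (x s) + B.mulVec (u s))) := by
        rw [← ContinuousLinearMap.intervalIntegral_comp_comm (mvCLM S) hv]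
        exact intervalIntegral.integral_congr fun s _ => hw_eq s
      rw [hIw, mvCLM_apply, ← Matrix.mulVec_add]
      exact (hSinj.eq_iff).symm
    rw [stepA]
    rw [eV, eV']
    rw [ContinuousLinearMap.intervalIntegral_comp_comm _ hwi,
      ContinuousLinearMap.intervalIntegral_comp_comm _ hwi]
    constructor
    · intro hz
      constructor
      · funext i
        have h1 := congrFun hz (Fin.castLE hrc i)
        rw [Pi.add_apply] at h1
        rw [hz_lo t i] at h1
        rw [hz_lo t₀ i] at h1
        simpa using h1
      · funext i
        have h1 := congrFun hz (hiIdx hrc i)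
        rw [Pi.add_apply, hz_hi t i, hz_hi t₀ i, zero_add] at h1
        simpa using h1.symm
    · rintro ⟨h1, h2⟩
      funext i
      rcases lt_or_ge (i : ℕ) r with h | h
      · have hi : Fin.castLE hrc (⟨(i : ℕ), h⟩ : Fin r) = i := Fin.ext rfl
        have := congrFun h1 (⟨(i : ℕ), h⟩ : Fin r)
        rw [Pi.add_apply] at this
        rw [← hi, Pi.add_apply, hz_lo t, hz_lo t₀]
        simpa using this
      · have hlt : (i : ℕ) - r < c - r := by have := i.isLt; omega
        have hi : hiIdx hrc (⟨(i : ℕ) - r, hlt⟩ : Fin (c - r)) = i := by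
          apply Fin.ext
          rw [hiIdx_val]
          show (i : ℕ) - r + r = (i : ℕ)
          omega
        have := congrFun h2 (⟨(i : ℕ) - r, hlt⟩ : Fin (c - r))
        rw [← hi, Pi.add_apply, hz_hi t, hz_hi t₀, zero_add]
        simpa using this.symm
  -- local integrability of the transformed functions
  have hp_loc : LocallyIntegrableOn
      (fun t i => (T⁻¹.mulVec (x t)) (Fin.castLE hrn i)) I := by
    have := hx.clm_comp ((restCLM (Fin.castLE hrn)).comp (mvCLM T⁻¹))
    exact this
  have hq_loc : LocallyIntegrableOn
      (fun t => Sum.elim (fun j => (T⁻¹.mulVec (x t)) (hiIdx hrn j)) (u t)) I := by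
    have h1 := hx.clm_comp ((padlCLM (Fin m) (hiIdx hrn)).comp (mvCLM T⁻¹))
    have h2 := hu.clm_comp (padrCLM (γ := Fin m) (Fin (n - r)))
    have h3 := h1.add h2
    have heq : (fun t => Sum.elim (fun j => (T⁻¹.mulVec (x t)) (hiIdx hrn j)) (u t)) =
        fun t => ((padlCLM (Fin m) (hiIdx hrn)).comp (mvCLM T⁻¹)) (x t) +
          (padrCLM (Fin (n - r))) (u t) := by
      funext t σ
      cases σ <;> simp
    rw [heq]
    exact h3
  have hV'_loc : LocallyIntegrableOn
      (fun τ => (blkC hrc hrn (S * A * T)).mulVec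
          (fun i => (T⁻¹.mulVec (x τ)) (Fin.castLE hrn i)) +
        (blkD hrc hrn (S * A * T) (S * B)).mulVec
          (Sum.elim (fun j => (T⁻¹.mulVec (x τ)) (hiIdx hrn j)) (u τ))) I := by
    rw [eV']
    have h1 := hx.clm_comp
      ((restCLM (hiIdx hrc)).comp ((mvCLM (S * A * T)).comp (mvCLM T⁻¹)))
    have h2 := hu.clm_comp ((restCLM (hiIdx hrc)).comp (mvCLM (S * B)))
    have h3 := h1.add h2
    have heq : (fun τ => restCLM (hiIdx hrc) (w τ)) =
        fun τ => ((restCLM (hiIdx hrc)).comp ((mvCLM (S * A * T)).comp (mvCLM T⁻¹))) (x τ) +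
          ((restCLM (hiIdx hrc)).comp (mvCLM (S * B))) (u τ) := by
      funext τ
      rw [hw_def]
      simp [map_add]
    rw [heq]
    exact h3
  constructor
  · rintro ⟨-, -, hsol⟩
    refine ⟨⟨hp_loc, hq_loc, fun t₀ ht₀ t ht hle =>
      ((main t₀ ht₀ t ht hle).1 (hsol t₀ ht₀ t ht hle)).1⟩, ?_⟩
    have := ae_zero_of_intervalIntegral_zero hI hV'_loc
      (fun t₀ ht₀ t ht hle => ((main t₀ ht₀ t ht hle).1 (hsol t₀ ht₀ t ht hle)).2)
    exact this
  · rintro ⟨⟨-, -, htraj⟩, hae⟩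
    refine ⟨hx, hu, fun t₀ ht₀ t ht hle => (main t₀ ht₀ t ht hle).2
      ⟨htraj t₀ ht₀ t ht hle, ?_⟩⟩
    have hsub : Set.Ioc t₀ t ⊆ I := Set.Ioc_subset_Icc_self.trans (hOC.out ht₀ ht)
    rw [intervalIntegral.integral_of_le hle]
    apply integral_eq_zero_of_ae
    exact ae_mono (Measure.restrict_mono hsub le_rfl) hae
end

section
/- Every ODE-LTI associated with the DAE d(Ex)/dt = Ax + Bu is a minimal state-space realization of the behavior B_ℝ(E,A,B): its state dimension is minimal among all ODE-LTI realizations of the set of solutions of the DAE on ℝ. -/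
open MeasureTheory Set Filter Matrix

open Classical in
noncomputable def pinv {α β : Type} [Fintype α] [Fintype β] [DecidableEq α] [DecidableEq β]
    (M : Matrix α β ℝ) : Matrix β α ℝ :=
  if h : ∃ X : Matrix β α ℝ,
      M * X * M = M ∧ X * M * X = X ∧ (M * X)ᵀ = M * X ∧ (X * M)ᵀ = X * M
  then h.choose else 0

def RealizesOn {c n m nh k : ℕ} (E A : Matrix (Fin c) (Fin n) ℝ) (B : Matrix (Fin c) (Fin m) ℝ)
    (Al : Matrix (Fin nh) (Fin nh) ℝ) (Bl : Matrix (Fin nh) (Fin k) ℝ)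
    (Cl : Matrix (Fin n ⊕ Fin m) (Fin nh) ℝ) (Dl : Matrix (Fin n ⊕ Fin m) (Fin k) ℝ)
    (I : Set ℝ) : Prop :=
  (∀ x u, IsDAESolution E A B I x u →
    ∃ p g, IsStateTraj Al Bl I p g ∧
      ∀ᵐ t ∂(volume.restrict I), Sum.elim (x t) (u t) = Cl.mulVec (p t) + Dl.mulVec (g t)) ∧
  (∀ p g, IsStateTraj Al Bl I p g →
    ∃ x u, IsDAESolution E A B I x u ∧
      ∀ᵐ t ∂(volume.restrict I), Sum.elim (x t) (u t) = Cl.mulVec (p t) + Dl.mulVec (g t))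

def firstRows {n m nh : ℕ} (Cl : Matrix (Fin n ⊕ Fin m) (Fin nh) ℝ) :
    Matrix (Fin n) (Fin nh) ℝ :=
  Matrix.of fun i j => Cl (Sum.inl i) j

def IsAssociated {c n m nh k : ℕ} (E A : Matrix (Fin c) (Fin n) ℝ)
    (B : Matrix (Fin c) (Fin m) ℝ)
    (Al : Matrix (Fin nh) (Fin nh) ℝ) (Bl : Matrix (Fin nh) (Fin k) ℝ)
    (Cl : Matrix (Fin n ⊕ Fin m) (Fin nh) ℝ) (Dl : Matrix (Fin n ⊕ Fin m) (Fin k) ℝ) : Prop :=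
  nh ≤ n ∧
  ((Dl = 0 ∧ Bl = 0 ∧ k = 1) ∨ Dl.rank = k) ∧
  E * firstRows Dl = 0 ∧ (E * firstRows Cl).rank = nh ∧
  ∀ I : Set ℝ, IsNiceInterval I → RealizesOn E A B Al Bl Cl Dl I

def ConsistencySet {c n m : ℕ} (E A : Matrix (Fin c) (Fin n) ℝ)
    (B : Matrix (Fin c) (Fin m) ℝ) : Set (Fin c → ℝ) :=
  {z | ∃ I : Set ℝ, IsNiceInterval I ∧ (0 : ℝ) ∈ I ∧
    ∃ x u, IsDAESolution E A B I x u ∧ E.mulVec (x 0) = z}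

/-!
Fix any realization `(A', B', C', D')` on `ℝ` and let `V` be the space of values `E x(0)` of
global solutions. The pairs `(p(0), E x(0))` of compatible trajectories form a subspace, and it is
the graph of a linear map by causality: if `p(0) = 0`, then `p` switched on at time `0` is again a
state trajectory, the corresponding DAE solution vanishes before `0` and agrees a.e. with `x`
after `0`, and continuity of `t ↦ E x(t)` forces `E x(0) = 0`. Hence `dim V ≤ nh'`. On the other
hand every state `p₀` of the associated realization starts the free trajectory `exp(t Al) p₀`,
whose output gives `E x = E C₁ p`, so `im (E C₁) ⊆ V` and `nh = rank (E C₁) ≤ dim V`.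
-/

theorem MeasureTheory.LocallyIntegrable.intervalIntegrable {V : Type*} [NormedAddCommGroup V]
    {f : ℝ → V} (hf : LocallyIntegrable f) (a b : ℝ) : IntervalIntegrable f volume a b :=
  (hf.integrableOn_isCompact isCompact_uIcc).intervalIntegrable

theorem MeasureTheory.LocallyIntegrable.mulVec {ι κ : Type*} [Fintype ι] [Fintype κ]
    (M : Matrix κ ι ℝ) {f : ℝ → ι → ℝ} (hf : LocallyIntegrable f) :
    LocallyIntegrable fun t => M *ᵥ f t := by
  rw [locallyIntegrable_iff] at hf ⊢
  exact fun K hK => M.mulVecLin.toContinuousLinearMap.integrable_comp (hf K hK)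

section Integrals

variable {V : Type*} [NormedAddCommGroup V] [NormedSpace ℝ V]

theorem forall_le_eq_add_integral_iff {f F : ℝ → V}
    (hF : ∀ a b, IntervalIntegrable F volume a b) :
    (∀ t₀ t, t₀ ≤ t → f t = f t₀ + ∫ s in t₀..t, F s) ↔ ∀ t, f t = f 0 + ∫ s in 0..t, F s := by
  refine ⟨fun h t => ?_, fun h t₀ t _ => ?_⟩
  · rcases le_total 0 t with ht | ht
    · exact h 0 t ht
    · rw [h t 0 ht, intervalIntegral.integral_symm]
      abel
  · rw [h t, h t₀, ← intervalIntegral.integral_add_adjacent_intervals (hF 0 t₀) (hF t₀ t)]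
    abel

theorem indicator_Ioi_eq_integral_indicator {f F : ℝ → V}
    (h : ∀ t, f t = ∫ s in 0..t, F s) (t : ℝ) :
    (Ioi 0).indicator f t = ∫ s in 0..t, (Ioi 0).indicator F s := by
  rcases le_or_gt t 0 with ht | ht
  · rw [indicator_of_notMem (show t ∉ Ioi 0 from not_lt.2 ht), eq_comm]
    refine intervalIntegral.integral_zero_ae (Eventually.of_forall fun s hs => ?_)
    rw [uIoc_of_ge ht] at hs
    exact indicator_of_notMem (not_lt.2 hs.2) F
  · rw [indicator_of_mem (show t ∈ Ioi 0 from ht), h t]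
    refine intervalIntegral.integral_congr_ae (Eventually.of_forall fun s hs => ?_)
    rw [uIoc_of_le ht.le] at hs
    exact (indicator_of_mem hs.1 F).symm

end Integrals

theorem eqOn_closure_of_ae_restrict_eq {X Y : Type*} [TopologicalSpace X] [MeasurableSpace X]
    [TopologicalSpace Y] [T2Space Y] {μ : Measure X} [μ.IsOpenPosMeasure] {f g : X → Y}
    (hf : Continuous f) (hg : Continuous g) {U : Set X} (hU : IsOpen U)
    (h : f =ᵐ[μ.restrict U] g) : EqOn f g (closure U) :=
  (Measure.eqOn_open_of_ae_eq h hU hf.continuousOn hg.continuousOn).closure hf hg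

theorem finrank_map_snd_le_of_graph {K M N : Type*} [Field K] [AddCommGroup M] [Module K M]
    [AddCommGroup N] [Module K N] [FiniteDimensional K M] (g : Submodule K (M × N))
    (hg : ∀ x ∈ g, x.1 = 0 → x.2 = 0) :
    Module.finrank K (g.map (LinearMap.snd K M N)) ≤ Module.finrank K M := by
  rw [← g.toLinearPMap_range hg]
  exact (LinearMap.finrank_range_le _).trans (Submodule.finrank_le _)

theorem eq_firstRows_mulVec_of_sum_elim_eq {n m r k : ℕ} {C : Matrix (Fin n ⊕ Fin m) (Fin r) ℝ}
    {D : Matrix (Fin n ⊕ Fin m) (Fin k) ℝ} {x : Fin n → ℝ} {u : Fin m → ℝ} {p : Fin r → ℝ}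
    {g : Fin k → ℝ} (h : Sum.elim x u = C *ᵥ p + D *ᵥ g) :
    x = firstRows C *ᵥ p + firstRows D *ᵥ g :=
  funext fun i => congrFun h (Sum.inl i)

section Solutions

variable {c n m : ℕ} {E A : Matrix (Fin c) (Fin n) ℝ} {B : Matrix (Fin c) (Fin m) ℝ}
  {x : ℝ → Fin n → ℝ} {u : ℝ → Fin m → ℝ}

theorem intervalIntegrable_mulVec_add_mulVec (hx : LocallyIntegrable x) (hu : LocallyIntegrable u)
    (a b : ℝ) : IntervalIntegrable (fun s => A *ᵥ x s + B *ᵥ u s) volume a b :=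
  ((hx.mulVec A).add (hu.mulVec B)).intervalIntegrable a b

theorem isDAESolution_univ_iff :
    IsDAESolution E A B univ x u ↔ LocallyIntegrable x ∧ LocallyIntegrable u ∧
      ∀ t, E *ᵥ x t = E *ᵥ x 0 + ∫ s in 0..t, (A *ᵥ x s + B *ᵥ u s) := by
  simp only [IsDAESolution, locallyIntegrableOn_univ, mem_univ, forall_const]
  refine and_congr_right fun hx => and_congr_right fun hu => ?_
  exact forall_le_eq_add_integral_iff (intervalIntegrable_mulVec_add_mulVec hx hu)

theorem IsDAESolution.continuous_mulVec (h : IsDAESolution E A B univ x u) :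
    Continuous fun t => E *ᵥ x t := by
  obtain ⟨hx, hu, heq⟩ := isDAESolution_univ_iff.1 h
  exact (continuous_const.add (intervalIntegral.continuous_primitive
    (intervalIntegrable_mulVec_add_mulVec hx hu) 0)).congr fun t => (heq t).symm

variable (E A B) in
def daeSolutions : Submodule ℝ ((ℝ → Fin n → ℝ) × (ℝ → Fin m → ℝ)) where
  carrier := {s | IsDAESolution E A B univ s.1 s.2}
  zero_mem' := isDAESolution_univ_iff.2 ⟨locallyIntegrable_zero, locallyIntegrable_zero,
    by simp⟩
  add_mem' := by
    rintro ⟨x₁, u₁⟩ ⟨x₂, u₂⟩ h₁ h₂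
    obtain ⟨hx₁, hu₁, heq₁⟩ := isDAESolution_univ_iff.1 h₁
    obtain ⟨hx₂, hu₂, heq₂⟩ := isDAESolution_univ_iff.1 h₂
    refine isDAESolution_univ_iff.2 ⟨hx₁.add hx₂, hu₁.add hu₂, fun t => ?_⟩
    simp only [Prod.fst_add, Prod.snd_add, Pi.add_apply, mulVec_add, heq₁ t, heq₂ t]
    rw [add_add_add_comm, ← intervalIntegral.integral_add
      (intervalIntegrable_mulVec_add_mulVec hx₁ hu₁ 0 t)
      (intervalIntegrable_mulVec_add_mulVec hx₂ hu₂ 0 t)]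
    simp only [add_add_add_comm]
  smul_mem' := by
    rintro a ⟨x, u⟩ h
    obtain ⟨hx, hu, heq⟩ := isDAESolution_univ_iff.1 h
    refine isDAESolution_univ_iff.2 ⟨hx.smul a, hu.smul a, fun t => ?_⟩
    simp only [Prod.smul_fst, Prod.smul_snd, Pi.smul_apply, mulVec_smul, heq t, ← smul_add,
      intervalIntegral.integral_smul]

end Solutions

section StateTrajectories

variable {r k : ℕ} {Al : Matrix (Fin r) (Fin r) ℝ} {Bl : Matrix (Fin r) (Fin k) ℝ}
  {p : ℝ → Fin r → ℝ} {g : ℝ → Fin k → ℝ}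

theorem isStateTraj_iff_isDAESolution {I : Set ℝ} :
    IsStateTraj Al Bl I p g ↔ IsDAESolution 1 Al Bl I p g := by
  simp only [IsStateTraj, IsDAESolution, one_mulVec]

theorem isStateTraj_univ_iff :
    IsStateTraj Al Bl univ p g ↔ LocallyIntegrable p ∧ LocallyIntegrable g ∧
      ∀ t, p t = p 0 + ∫ s in 0..t, (Al *ᵥ p s + Bl *ᵥ g s) := by
  simpa only [one_mulVec] using isStateTraj_iff_isDAESolution.trans isDAESolution_univ_iff

theorem IsStateTraj.continuous (h : IsStateTraj Al Bl univ p g) : Continuous p := by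
  simpa only [one_mulVec] using (isStateTraj_iff_isDAESolution.1 h).continuous_mulVec

theorem IsStateTraj.indicator_Ioi (h : IsStateTraj Al Bl univ p g) (h0 : p 0 = 0) :
    IsStateTraj Al Bl univ ((Ioi 0).indicator p) ((Ioi 0).indicator g) := by
  obtain ⟨hp, hg, heq⟩ := isStateTraj_univ_iff.1 h
  have hF : (fun s => Al *ᵥ (Ioi 0).indicator p s + Bl *ᵥ (Ioi 0).indicator g s) =
      (Ioi 0).indicator fun s => Al *ᵥ p s + Bl *ᵥ g s := by
    funext s
    by_cases hs : s ∈ Ioi (0 : ℝ) <;> simp [hs]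
  refine isStateTraj_univ_iff.2 ⟨hp.indicator measurableSet_Ioi, hg.indicator measurableSet_Ioi,
    fun t => ?_⟩
  rw [hF, indicator_of_notMem self_notMem_Ioi, zero_add]
  exact indicator_Ioi_eq_integral_indicator (fun t => by rw [heq t, h0, zero_add]) t

variable (Al Bl) in
theorem exists_isStateTraj_zero_input (p₀ : Fin r → ℝ) :
    ∃ p : ℝ → Fin r → ℝ, p 0 = p₀ ∧ IsStateTraj Al Bl univ p 0 := by
  set T : (Fin r → ℝ) →L[ℝ] (Fin r → ℝ) := Al.mulVecLin.toContinuousLinearMap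
  have hderiv : ∀ t : ℝ, HasDerivAt (fun t : ℝ => NormedSpace.exp (t • T) p₀)
      (Al *ᵥ NormedSpace.exp (t • T) p₀) t := fun t => by
    simpa [T] using (hasDerivAt_exp_smul_const' (𝕂 := ℝ) T t).clm_apply (hasDerivAt_const t p₀)
  have hcont : Continuous fun t : ℝ => NormedSpace.exp (t • T) p₀ :=
    continuous_iff_continuousAt.2 fun t => (hderiv t).continuousAt
  refine ⟨fun t => NormedSpace.exp (t • T) p₀, by simp,
    isStateTraj_univ_iff.2 ⟨hcont.locallyIntegrable, locallyIntegrable_zero, fun t => ?_⟩⟩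
  simp only [Pi.zero_apply, mulVec_zero, add_zero]
  rw [intervalIntegral.integral_eq_sub_of_hasDerivAt (fun s _ => hderiv s)
    ((T.continuous.comp hcont).intervalIntegrable 0 t)]
  abel

end StateTrajectories

section Realizations

variable {c n m : ℕ} (E A : Matrix (Fin c) (Fin n) ℝ) (B : Matrix (Fin c) (Fin m) ℝ)

def globalConsistencySpace : Submodule ℝ (Fin c → ℝ) :=
  (daeSolutions E A B).map (E.mulVecLin ∘ₗ LinearMap.proj 0 ∘ₗ LinearMap.fst ℝ _ _)

variable {r k : ℕ} (A' : Matrix (Fin r) (Fin r) ℝ) (B' : Matrix (Fin r) (Fin k) ℝ)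
  (C' : Matrix (Fin n ⊕ Fin m) (Fin r) ℝ) (D' : Matrix (Fin n ⊕ Fin m) (Fin k) ℝ)

def outputRelation :
    Submodule ℝ (((ℝ → Fin n → ℝ) × (ℝ → Fin m → ℝ)) × ((ℝ → Fin r → ℝ) × (ℝ → Fin k → ℝ))) where
  carrier := {z | ∀ᵐ t, Sum.elim (z.1.1 t) (z.1.2 t) = C' *ᵥ z.2.1 t + D' *ᵥ z.2.2 t}
  zero_mem' := by simp
  add_mem' := by
    intro z w hz hw
    simp only [mem_ofPred_eq] at hz hw ⊢
    filter_upwards [hz, hw] with t hzt hwt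
    simp only [Prod.fst_add, Prod.snd_add, Pi.add_apply]
    rw [Sum.elim_add_add, hzt, hwt, mulVec_add, mulVec_add]
    abel
  smul_mem' := by
    intro a z hz
    simp only [mem_ofPred_eq] at hz ⊢
    filter_upwards [hz] with t hzt
    have : Sum.elim (a • z.1.1 t) (a • z.1.2 t) = a • Sum.elim (z.1.1 t) (z.1.2 t) := by
      funext i; cases i <;> rfl
    simp only [Prod.smul_fst, Prod.smul_snd, Pi.smul_apply, this, hzt, mulVec_smul, smul_add]

/-- The pairs `(p 0, E x 0)` of compatible trajectories of the DAE and of the ODE-LTI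
`(A', B', C', D')`. -/
def initialValueRelation : Submodule ℝ ((Fin r → ℝ) × (Fin c → ℝ)) :=
  ((daeSolutions E A B).prod (daeSolutions 1 A' B') ⊓ outputRelation C' D').map
    ((LinearMap.proj 0 ∘ₗ LinearMap.fst ℝ _ _ ∘ₗ LinearMap.snd ℝ _ _).prod
      (E.mulVecLin ∘ₗ LinearMap.proj 0 ∘ₗ LinearMap.fst ℝ _ _ ∘ₗ LinearMap.fst ℝ _ _))

variable {E A B A' B' C' D'}

theorem mem_globalConsistencySpace {z : Fin c → ℝ} :
    z ∈ globalConsistencySpace E A B ↔ ∃ x u, IsDAESolution E A B univ x u ∧ E *ᵥ x 0 = z := by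
  simp [globalConsistencySpace, daeSolutions]

theorem mem_initialValueRelation {w : (Fin r → ℝ) × (Fin c → ℝ)} :
    w ∈ initialValueRelation E A B A' B' C' D' ↔
      ∃ x u p g, IsDAESolution E A B univ x u ∧ IsStateTraj A' B' univ p g ∧
        (∀ᵐ t, Sum.elim (x t) (u t) = C' *ᵥ p t + D' *ᵥ g t) ∧ (p 0, E *ᵥ x 0) = w := by
  simp [initialValueRelation, daeSolutions, outputRelation, isStateTraj_iff_isDAESolution,
    and_assoc]

theorem snd_eq_zero_of_mem_initialValueRelation (hreal : RealizesOn E A B A' B' C' D' univ)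
    {w : (Fin r → ℝ) × (Fin c → ℝ)} (hw : w ∈ initialValueRelation E A B A' B' C' D')
    (hw₁ : w.1 = 0) : w.2 = 0 := by
  obtain ⟨x, u, p, g, hs, ht, ho, rfl⟩ := mem_initialValueRelation.1 hw
  obtain ⟨x', u', hs', ho'⟩ := hreal.2 _ _ (ht.indicator_Ioi hw₁)
  rw [Measure.restrict_univ] at ho'
  have hEx' : ∀ᵐ t, E *ᵥ x' t = (Ioi 0).indicator (fun t => E *ᵥ x t) t := by
    filter_upwards [ho, ho'] with t hot hot'
    rw [eq_firstRows_mulVec_of_sum_elim_eq hot']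
    by_cases htpos : t ∈ Ioi 0 <;> simp [htpos, eq_firstRows_mulVec_of_sum_elim_eq hot]
  have hneg : E *ᵥ x' 0 = 0 := by
    refine eqOn_closure_of_ae_restrict_eq (μ := volume) hs'.continuous_mulVec continuous_const
      isOpen_Iio ?_ (show (0 : ℝ) ∈ closure (Iio 0) by simp)
    filter_upwards [ae_restrict_of_ae hEx', ae_restrict_mem measurableSet_Iio] with t h htneg
    rw [h, indicator_of_notMem (show t ∉ Ioi 0 from not_lt.2 (mem_Iio.1 htneg).le)]
  have hpos : E *ᵥ x' 0 = E *ᵥ x 0 := by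
    refine eqOn_closure_of_ae_restrict_eq (μ := volume) hs'.continuous_mulVec
      hs.continuous_mulVec isOpen_Ioi ?_ (show (0 : ℝ) ∈ closure (Ioi 0) by simp)
    filter_upwards [ae_restrict_of_ae hEx', ae_restrict_mem measurableSet_Ioi] with t h htpos
    rw [h, indicator_of_mem htpos]
  rw [← hpos, hneg]

theorem globalConsistencySpace_le_map_snd (hreal : RealizesOn E A B A' B' C' D' univ) :
    globalConsistencySpace E A B ≤
      (initialValueRelation E A B A' B' C' D').map (LinearMap.snd ℝ _ _) := by
  intro z hz
  obtain ⟨x, u, hs, rfl⟩ := mem_globalConsistencySpace.1 hz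
  obtain ⟨p, g, ht, ho⟩ := hreal.1 x u hs
  rw [Measure.restrict_univ] at ho
  exact ⟨(p 0, E *ᵥ x 0), mem_initialValueRelation.2 ⟨x, u, p, g, hs, ht, ho, rfl⟩, rfl⟩

theorem finrank_globalConsistencySpace_le (hreal : RealizesOn E A B A' B' C' D' univ) :
    Module.finrank ℝ (globalConsistencySpace E A B) ≤ r :=
  calc Module.finrank ℝ (globalConsistencySpace E A B)
      ≤ Module.finrank ℝ ((initialValueRelation E A B A' B' C' D').map (LinearMap.snd ℝ _ _)) :=
        Submodule.finrank_mono (globalConsistencySpace_le_map_snd hreal)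
    _ ≤ Module.finrank ℝ (Fin r → ℝ) := finrank_map_snd_le_of_graph _ fun _ hw hw₁ =>
        snd_eq_zero_of_mem_initialValueRelation hreal hw hw₁
    _ = r := Module.finrank_fin_fun ℝ

theorem range_mulVecLin_le_globalConsistencySpace (hreal : RealizesOn E A B A' B' C' D' univ) :
    LinearMap.range (E * firstRows C').mulVecLin ≤ globalConsistencySpace E A B := by
  rintro _ ⟨p₀, rfl⟩
  obtain ⟨p, hp₀, ht⟩ := exists_isStateTraj_zero_input A' B' p₀
  obtain ⟨x, u, hs, ho⟩ := hreal.2 p 0 ht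
  rw [Measure.restrict_univ] at ho
  have hEx : (fun t => E *ᵥ x t) = fun t => (E * firstRows C') *ᵥ p t := by
    refine Measure.eq_of_ae_eq (ho.mono fun t hot => ?_) hs.continuous_mulVec
      (continuous_const.matrix_mulVec ht.continuous)
    simp [eq_firstRows_mulVec_of_sum_elim_eq hot, mulVec_mulVec]
  exact mem_globalConsistencySpace.2 ⟨x, u, hs, by simpa [hp₀] using congrFun hEx 0⟩

end Realizations

/-- Corollary (Minimality), part 1: every associated ODE-LTI is a minimal state-space
realization of the behavior `B_ℝ(E,A,B)`. -/
theorem associated_is_minimal_realization {c n m nh k : ℕ}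
    (E A : Matrix (Fin c) (Fin n) ℝ) (B : Matrix (Fin c) (Fin m) ℝ)
    (Al : Matrix (Fin nh) (Fin nh) ℝ) (Bl : Matrix (Fin nh) (Fin k) ℝ)
    (Cl : Matrix (Fin n ⊕ Fin m) (Fin nh) ℝ) (Dl : Matrix (Fin n ⊕ Fin m) (Fin k) ℝ)
    (hassoc : IsAssociated E A B Al Bl Cl Dl) :
    RealizesOn E A B Al Bl Cl Dl Set.univ ∧
    ∀ (nh' k' : ℕ) (A' : Matrix (Fin nh') (Fin nh') ℝ) (B' : Matrix (Fin nh') (Fin k') ℝ)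
      (C' : Matrix (Fin n ⊕ Fin m) (Fin nh') ℝ) (D' : Matrix (Fin n ⊕ Fin m) (Fin k') ℝ),
      RealizesOn E A B A' B' C' D' Set.univ → nh ≤ nh' := by
  obtain ⟨-, -, -, hrank, hrealizes⟩ := hassoc
  have hreal := hrealizes univ (Or.inr (Or.inr (Or.inr rfl)))
  refine ⟨hreal, fun nh' k' A' B' C' D' hreal' => ?_⟩
  calc nh = (E * firstRows Cl).rank := hrank.symm
    _ ≤ Module.finrank ℝ (globalConsistencySpace E A B) :=
      Submodule.finrank_mono (range_mulVecLin_le_globalConsistencySpace hreal)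
    _ ≤ nh' := finrank_globalConsistencySpace_le hreal'
end
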